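/- The difference logic DL does not have the Craig interpolation property: there exist modal formulas φ and ψ with sig(φ) ∩ sig(ψ) = ∅ such that φ → ψ is DL-valid, but there is no formula ι with sig(ι) ⊆ sig(φ) ∩ sig(ψ) such that both φ → ι and ι → ψ are DL-valid. -/

import Mathlib

/-- Modal formulas built from propositional variables (indexed by ℕ),
constants ⊤, ⊥, negation, conjunction and the modal operator ◇. -/
inductive MF : Type where
  | var : ℕ → MF
  | top : MF
  | bot : MF
  | neg : MF → MF
  | and : MF → MF → MF
  | dia : MF → MF
deriving DecidableEq

namespace MF

/-- Disjunction, as an abbreviation. -/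
def or (a b : MF) : MF := neg (and (neg a) (neg b))

/-- Implication, as an abbreviation. -/
def imp (a b : MF) : MF := MF.or (neg a) b

/-- Box, as an abbreviation: □φ := ¬◇¬φ. -/
def box (a : MF) : MF := neg (dia (neg a))

/-- The (finite) set of propositional variables occurring in a formula. -/
def sig : MF → Finset ℕ
  | var n => {n}
  | top => ∅
  | bot => ∅
  | neg a => a.sig
  | and a b => a.sig ∪ b.sig
  | dia a => a.sig

/-- The set of subformulas of a formula. -/
def subf : MF → Finset MF
  | var n => {var n}
  | top => {top}
  | bot => {bot}
  | neg a => insert (neg a) (subf a)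
  | and a b => insert (and a b) (subf a ∪ subf b)
  | dia a => insert (dia a) (subf a)

/-- The number of subformulas of a formula. -/
def nsub (a : MF) : ℕ := (subf a).card

end MF

/-- A Kripke model: a binary (accessibility) relation on worlds together with
a valuation assigning to each propositional variable a set of worlds. -/
structure KModel (W : Type) where
  R : W → W → Prop
  val : ℕ → W → Prop

/-- Weak transitivity: xRy and yRz imply x = z or xRz. -/
def WTrans {W : Type} (R : W → W → Prop) : Prop :=
  ∀ x y z : W, R x y → R y z → x = z ∨ R x z

/-- The usual Kripke truth relation. -/
def Sat {W : Type} (M : KModel W) : W → MF → Prop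
  | x, .var n => M.val n x
  | _, .top => True
  | _, .bot => False
  | x, .neg a => ¬ Sat M x a
  | x, .and a b => Sat M x a ∧ Sat M x b
  | x, .dia a => ∃ y, M.R x y ∧ Sat M y a

/-- wK4-validity: truth at every point of every model based on a weakly
transitive frame. -/
def WK4Valid (φ : MF) : Prop :=
  ∀ (W : Type) (M : KModel W), WTrans M.R → ∀ x : W, Sat M x φ

/-- The cluster of a point x: C(x) = {x} ∪ {y | xRy and yRx}. -/
def cluster {W : Type} (R : W → W → Prop) (x : W) : Set W :=
  {x} ∪ {y | R x y ∧ R y x}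

/-- C R C' for sets of points: xRy for some x ∈ C, y ∈ C'. -/
def clusterRel {W : Type} (R : W → W → Prop) (C C' : Set W) : Prop :=
  ∃ x ∈ C, ∃ y ∈ C', R x y

/-- C R y for a set C and point y: xRy for some x ∈ C. -/
def clusterRelPt {W : Type} (R : W → W → Prop) (C : Set W) (y : W) : Prop :=
  ∃ x ∈ C, R x y

/-- C R^s C': C R C' and C ≠ C'. -/
def clusterRelS {W : Type} (R : W → W → Prop) (C C' : Set W) : Prop :=
  clusterRel R C C' ∧ C ≠ C'

/-- A set is a cluster if it is the cluster of some point. -/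
def IsCluster {W : Type} (R : W → W → Prop) (C : Set W) : Prop :=
  ∃ x : W, C = cluster R x

/-- A σ-model is descriptive if it satisfies (dif), (ref) and (com). -/
def Descriptive {W : Type} (σ : Finset ℕ) (M : KModel W) : Prop :=
  (∀ x y : W, (∀ φ : MF, φ.sig ⊆ σ → (Sat M x φ ↔ Sat M y φ)) → x = y) ∧
  (∀ x y : W, M.R x y ↔ ∀ χ : MF, χ.sig ⊆ σ → Sat M y χ → Sat M x (MF.dia χ)) ∧
  (∀ Γ : Set MF, (∀ φ ∈ Γ, φ.sig ⊆ σ) →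
    (∀ Γ' : Finset MF, ↑Γ' ⊆ Γ → ∃ x : W, ∀ φ ∈ Γ', Sat M x φ) →
    ∃ x : W, ∀ φ ∈ Γ, Sat M x φ)

/-- The ρ-type of a point: the set of all ρ-formulas true at it. -/
def rType {W : Type} (M : KModel W) (ρ : Finset ℕ) (x : W) : Set MF :=
  {φ : MF | φ.sig ⊆ ρ ∧ Sat M x φ}

/-- A cluster C is ρ-maximal if whenever C R y and some x ∈ C has the same
ρ-type as y, then y ∈ C. -/
def RhoMaximal {W : Type} (M : KModel W) (ρ : Finset ℕ) (C : Set W) : Prop :=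
  ∀ x ∈ C, ∀ y : W, clusterRelPt M.R C y → rType M ρ x = rType M ρ y → y ∈ C

/-- β is a ρ-bisimulation between M1 and M2: conditions (atom) and (move). -/
def IsBisim {W1 W2 : Type} (ρ : Finset ℕ) (M1 : KModel W1) (M2 : KModel W2)
    (β : W1 → W2 → Prop) : Prop :=
  ∀ x1 x2, β x1 x2 →
    (∀ n ∈ ρ, M1.val n x1 ↔ M2.val n x2) ∧
    (∀ y1, M1.R x1 y1 → ∃ y2, M2.R x2 y2 ∧ β y1 y2) ∧
    (∀ y2, M2.R x2 y2 → ∃ y1, M1.R x1 y1 ∧ β y1 y2)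

/-- M1,x1 ∼ρ M2,x2 : some ρ-bisimulation relates x1 to x2. -/
def Bisimilar {W1 W2 : Type} (ρ : Finset ℕ) (M1 : KModel W1) (x1 : W1)
    (M2 : KModel W2) (x2 : W2) : Prop :=
  ∃ β : W1 → W2 → Prop, IsBisim ρ M1 M2 β ∧ β x1 x2

/-- DL-validity: truth at every point of every model based on a difference
frame (W, ≠). -/
def DLValid (φ : MF) : Prop :=
  ∀ (W : Type) (val : ℕ → W → Prop) (x : W),
    Sat ⟨fun a b : W => a ≠ b, val⟩ x φ


/-!
In a difference frame, `φ := p ∧ ¬◇p ∧ ◇(¬p ∧ □p)` forces the frame to have exactly two points,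
and in a two-point difference frame every point sees exactly one other point, so
`ψ := ¬(◇q ∧ ◇¬q)` holds. An interpolant would have no variables. But a variable-free
formula has the same truth value at every point of every difference frame with at least two
points, since `◇χ` then holds exactly when `χ` does. Hence it cannot be true in the two-point
model of `φ` and false in a three-point model of `¬ψ`.
-/

namespace DLCraig

def diffModel (W : Type) (val : ℕ → W → Prop) : KModel W := ⟨fun a b => a ≠ b, val⟩

theorem sat_imp {W : Type} (M : KModel W) (x : W) (a b : MF) :
    Sat M x (a.imp b) ↔ (Sat M x a → Sat M x b) := by
  simp only [MF.imp, MF.or, Sat]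
  tauto

theorem sat_diffModel_dia {W : Type} (val : ℕ → W → Prop) (x : W) (a : MF) :
    Sat (diffModel W val) x a.dia ↔ ∃ y, x ≠ y ∧ Sat (diffModel W val) y a :=
  Iff.rfl

theorem sat_closed_iff (χ : MF) (hχ : χ.sig = ∅)
    {W W' : Type} [Nontrivial W] [Nontrivial W'] (val : ℕ → W → Prop) (val' : ℕ → W' → Prop)
    (x : W) (x' : W') :
    Sat (diffModel W val) x χ ↔ Sat (diffModel W' val') x' χ := by
  induction χ generalizing W W' with
  | var n => simp [MF.sig] at hχ
  | top | bot => rfl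
  | neg a ih => exact not_congr (ih hχ val val' x x')
  | and a b iha ihb =>
    obtain ⟨ha, hb⟩ := Finset.union_eq_empty.mp hχ
    exact and_congr (iha ha val val' x x') (ihb hb val val' x x')
  | dia a ih =>
    obtain ⟨y, hy⟩ := exists_ne x
    obtain ⟨y', hy'⟩ := exists_ne x'
    simp only [sat_diffModel_dia]
    constructor
    · rintro ⟨z, -, hz⟩
      exact ⟨y', hy'.symm, (ih hχ val val' z y').mp hz⟩
    · rintro ⟨z', -, hz'⟩
      exact ⟨y, hy.symm, (ih hχ val val' y z').mpr hz'⟩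

def p : MF := .var 0

def q : MF := .var 1

def phi : MF := .and p (.and (.neg p.dia) (MF.and (.neg p) p.box).dia)

def psi : MF := .neg (.and q.dia q.neg.dia)

theorem eq_or_eq_of_sat_phi {W : Type} (val : ℕ → W → Prop) (x : W)
    (h : Sat (diffModel W val) x phi) : ∃ y, ∀ z, z = x ∨ z = y := by
  obtain ⟨-, hp_only_x, y, -, -, hp_all_but_y⟩ := h
  refine ⟨y, fun z => ?_⟩
  by_contra! hz
  exact hp_all_but_y ⟨z, hz.2.symm, fun hpz => hp_only_x ⟨z, hz.1.symm, hpz⟩⟩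

theorem sat_psi_of_forall_eq_or_eq {W : Type} (val : ℕ → W → Prop) (x y : W)
    (h : ∀ z, z = x ∨ z = y) : Sat (diffModel W val) x psi := by
  rintro ⟨⟨z₁, hxz₁, hq₁⟩, ⟨z₂, hxz₂, hq₂⟩⟩
  have hz₁ := (h z₁).resolve_left hxz₁.symm
  have hz₂ := (h z₂).resolve_left hxz₂.symm
  exact hq₂ (hz₂ ▸ hz₁ ▸ hq₁)

theorem dlValid_phi_imp_psi : DLValid (phi.imp psi) := fun W val x => by
  rw [sat_imp]
  intro h
  obtain ⟨y, hy⟩ := eq_or_eq_of_sat_phi val x h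
  exact sat_psi_of_forall_eq_or_eq val x y hy

theorem sat_phi_bool : Sat (diffModel Bool fun _ w => w = true) true phi := by
  simp [phi, p, MF.box, Sat, diffModel]

theorem not_sat_psi_fin_three : ¬ Sat (diffModel (Fin 3) fun _ w => w = 1) 0 psi := by
  simp only [psi, q, Sat, diffModel, not_not]
  exact ⟨⟨1, by decide, rfl⟩, ⟨2, by decide, by decide⟩⟩

theorem sig_phi_inter_sig_psi : phi.sig ∩ psi.sig = ∅ := by decide

theorem not_exists_interpolant : ¬ ∃ ι : MF, ι.sig ⊆ phi.sig ∩ psi.sig ∧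
    DLValid (phi.imp ι) ∧ DLValid (ι.imp psi) := by
  rintro ⟨ι, hsig, hφι, hιψ⟩
  rw [sig_phi_inter_sig_psi, Finset.subset_empty] at hsig
  have hι₂ := (sat_imp _ _ _ _).mp (hφι Bool _ true) sat_phi_bool
  have hι₃ := (sat_closed_iff ι hsig _ (fun _ w => w = (1 : Fin 3)) true 0).mp hι₂
  exact not_sat_psi_fin_three ((sat_imp _ _ _ _).mp (hιψ (Fin 3) _ 0) hι₃)

end DLCraig

/-- The difference logic DL does not have the Craig interpolation property. -/
theorem stmt8 :
    ∃ φ ψ : MF, φ.sig ∩ ψ.sig = ∅ ∧ DLValid (MF.imp φ ψ) ∧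
      ¬ ∃ ι : MF, ι.sig ⊆ φ.sig ∩ ψ.sig ∧
        DLValid (MF.imp φ ι) ∧ DLValid (MF.imp ι ψ) :=
  ⟨DLCraig.phi, DLCraig.psi, DLCraig.sig_phi_inter_sig_psi, DLCraig.dlValid_phi_imp_psi,
    DLCraig.not_exists_interpolant⟩
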